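/- Let σ² > 0, and consider combining two independent unbiased estimators of μ: the classical sample mean Ȳ_n with variance σ²/n, and the rectified PPI estimator with variance (λ²Var(F)/N + Var(Y−λF)/n). If Cov(Y,F) > 0 and N/n → ∞, then at λ* = Cov(Y,F)/Var(F) the PPI asymptotic variance Var(Y)(1−ρ²)/n is strictly smaller than σ²/n = Var(Y)/n whenever ρ ≠ 0. -/

import Mathlib

/-!
`Var(Y - λF) = Var Y - 2λ Cov(Y,F) + λ² Var F` is a quadratic in `λ`, minimised at
`λ* = Cov(Y,F) / Var F` with minimum `Var Y - Cov(Y,F)² / Var F = Var Y (1 - ρ²)`,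
which is strictly below `Var Y` as soon as `Cov(Y,F) ≠ 0`.
-/

open MeasureTheory ProbabilityTheory

noncomputable def cov {Ω : Type*} [MeasurableSpace Ω] (μ : Measure Ω)
    (Y F : Ω → ℝ) : ℝ :=
  ∫ ω, (Y ω - ∫ ω', Y ω' ∂μ) * (F ω - ∫ ω', F ω' ∂μ) ∂μ

section

variable {Ω : Type*} [MeasurableSpace Ω] {μ : Measure Ω} {Y F : Ω → ℝ}

lemma cov_eq_covariance : cov μ Y F = covariance Y F μ := rfl

lemma variance_sub_const_mul [IsFiniteMeasure μ] (hY : MemLp Y 2 μ) (hF : MemLp F 2 μ)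
    (c : ℝ) :
    variance (fun ω => Y ω - c * F ω) μ =
      variance Y μ - 2 * c * cov μ Y F + c ^ 2 * variance F μ := by
  rw [variance_fun_sub hY (hF.const_mul c), covariance_const_mul_right, variance_const_mul,
    cov_eq_covariance]
  ring

lemma variance_sub_optimal_mul [IsFiniteMeasure μ] (hY : MemLp Y 2 μ) (hF : MemLp F 2 μ)
    (hVF : variance F μ ≠ 0) :
    variance (fun ω => Y ω - (cov μ Y F / variance F μ) * F ω) μ =
      variance Y μ - cov μ Y F ^ 2 / variance F μ := by
  rw [variance_sub_const_mul hY hF]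
  field_simp
  ring

end

lemma mul_one_sub_div_sqrt_mul_sq {v w c : ℝ} (hv : 0 < v) (hw : 0 ≤ w) :
    v * (1 - (c / Real.sqrt (v * w)) ^ 2) = v - c ^ 2 / w := by
  rw [div_pow, Real.sq_sqrt (mul_nonneg hv.le hw), mul_comm v w, ← div_div, mul_sub,
    mul_div_cancel₀ _ hv.ne', mul_one]

theorem ppi_beats_classical_general
    {Ω : Type*} [MeasurableSpace Ω] (μ : Measure Ω) [IsProbabilityMeasure μ]
    (Y F : Ω → ℝ) (hY : MemLp Y 2 μ) (hF : MemLp F 2 μ)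
    (hVY : 0 < variance Y μ) (hVF : 0 < variance F μ)
    (hcov : 0 < cov μ Y F)
    (n : ℕ) (hn : 0 < n) :
    variance (fun ω => Y ω - (cov μ Y F / variance F μ) * F ω) μ / n =
      variance Y μ *
        (1 - (cov μ Y F / Real.sqrt (variance Y μ * variance F μ)) ^ 2) / n ∧
    variance Y μ *
        (1 - (cov μ Y F / Real.sqrt (variance Y μ * variance F μ)) ^ 2) / n <
      variance Y μ / n := by
  rw [mul_one_sub_div_sqrt_mul_sq hVY hVF.le, variance_sub_optimal_mul hY hF hVF.ne']
  have hgain : 0 < cov μ Y F ^ 2 / variance F μ := div_pos (pow_pos hcov 2) hVF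
  exact ⟨rfl, div_lt_div_of_pos_right (sub_lt_self _ hgain) (Nat.cast_pos.mpr hn)⟩

/-- Optimally tuned PPI strictly beats classical inference when the autorater
is correlated with the true label and unlabeled data is abundant: with
`λ* = Cov(Y,F)/Var(F)` and `ρ = Cov(Y,F)/√(Var(Y)·Var(F))`, if
`Cov(Y,F) > 0` then the asymptotic PPI variance satisfies
`Var(Y − λ*F)/n = Var(Y)(1−ρ²)/n < Var(Y)/n`. -/
theorem ppi_beats_classical
    {Ω : Type*} [MeasurableSpace Ω] (μ : Measure Ω) [IsProbabilityMeasure μ]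
    (Y F : Ω → ℝ) (hY : MemLp Y 2 μ) (hF : MemLp F 2 μ)
    (hYm : Measurable Y) (hFm : Measurable F)
    (hVY : 0 < variance Y μ) (hVF : 0 < variance F μ)
    (hcov : 0 < cov μ Y F)
    (n : ℕ) (hn : 0 < n) :
    variance (fun ω => Y ω - (cov μ Y F / variance F μ) * F ω) μ / n =
      variance Y μ *
        (1 - (cov μ Y F / Real.sqrt (variance Y μ * variance F μ)) ^ 2) / n ∧
    variance Y μ *
        (1 - (cov μ Y F / Real.sqrt (variance Y μ * variance F μ)) ^ 2) / n <
      variance Y μ / n :=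
  ppi_beats_classical_general μ Y F hY hF hVY hVF hcov n hn
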